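/- A binary linear [n,k,d] code C is minimum stopping (i.e., every stopping set of the complete parity-check matrix is the support of a codeword, equivalently S*(x) = A(x)) if and only if C is equivalent to R_{n₁} ⊕ ... ⊕ R_{n_u} ⊕ F_{n_F} ⊕ Z_{n_Z} for some nonnegative integers u, n₁,...,n_u ≥ 2, n_F, n_Z with n₁+...+n_u+n_F+n_Z = n. -/
import Mathlib


open Finset

variable {ι : Type*}

/-- Support of a binary word. -/
def supp [Fintype ι] (x : ι → ZMod 2) : Finset ι :=
  Finset.univ.filter (fun j => x j ≠ 0)

/-- Hamming weight of a binary word. -/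
def wt [Fintype ι] (x : ι → ZMod 2) : ℕ := (supp x).card

/-- `S` is a stopping set for the matrix `H` if no row of the column-submatrix `H_S`
has weight exactly one. -/
def IsStoppingSet {ρ : Type*} (H : Matrix ρ ι (ZMod 2)) (S : Finset ι) : Prop :=
  ∀ i : ρ, (S.filter (fun j => H i j = 1)).card ≠ 1

/-- The dual code of a binary linear code. -/
def dualCode [Fintype ι] (C : Submodule (ZMod 2) (ι → ZMod 2)) :
    Submodule (ZMod 2) (ι → ZMod 2) where
  carrier := {y | ∀ x ∈ C, ∑ j, y j * x j = 0}
  add_mem' := by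
    intro a b ha hb x hx
    simp only [Set.mem_setOf_eq] at *
    simp [Pi.add_apply, add_mul, Finset.sum_add_distrib, ha x hx, hb x hx]
  zero_mem' := by intro x hx; simp
  smul_mem' := by
    intro c a ha x hx
    simp only [Set.mem_setOf_eq] at *
    simp [Pi.smul_apply, smul_eq_mul, mul_assoc, ← Finset.mul_sum, ha x hx]

/-- The complete parity-check matrix of `C`: rows indexed by all dual codewords. -/
def Hstar [Fintype ι] (C : Submodule (ZMod 2) (ι → ZMod 2)) :
    Matrix (dualCode C) ι (ZMod 2) := fun y j => (y : ι → ZMod 2) j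

/-- A code is minimum stopping if every stopping set of its complete parity-check
matrix is the support of a codeword. -/
def MinStopping [Fintype ι] (C : Submodule (ZMod 2) (ι → ZMod 2)) : Prop :=
  ∀ S : Finset ι, IsStoppingSet (Hstar C) S → ∃ c ∈ C, supp c = S

/-- `H` is a parity-check matrix for `C` : the words checked by all rows of `H`
are exactly the codewords of `C`. -/
def IsPCM {ρ : Type*} [Fintype ι] (C : Submodule (ZMod 2) (ι → ZMod 2))
    (H : Matrix ρ ι (ZMod 2)) : Prop :=
  ∀ x : ι → ZMod 2, x ∈ C ↔ ∀ i : ρ, ∑ j, H i j * x j = 0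

section A
variable {n : ℕ} {C : Submodule (ZMod 2) (Fin n → ZMod 2)}

lemma zmod2_cases (a : ZMod 2) : a = 0 ∨ a = 1 := by revert a; decide
lemma zmod2_ne_zero {a : ZMod 2} : a ≠ 0 ↔ a = 1 := by revert a; decide
lemma zmod2_add_self (a : ZMod 2) : a + a = 0 := by revert a; decide

lemma mem_supp {x : Fin n → ZMod 2} {j : Fin n} : j ∈ supp x ↔ x j ≠ 0 := by simp [supp]

lemma sum_mul_eq_card (y x : Fin n → ZMod 2) :
    ∑ j, y j * x j = ((Finset.univ.filter (fun j => y j = 1 ∧ x j = 1)).card : ZMod 2) := by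
  rw [← Finset.sum_boole]
  refine Finset.sum_congr rfl fun j _ => ?_
  rcases zmod2_cases (y j) with h | h <;> rcases zmod2_cases (x j) with h' | h' <;> simp [h, h']

/-- The support of a codeword is a stopping set of the complete PCM. -/
lemma supp_isStopping {x : Fin n → ZMod 2} (hx : x ∈ C) :
    IsStoppingSet (Hstar C) (supp x) := by
  rintro ⟨y, hy⟩ hcard
  have h0 : ∑ j, y j * x j = 0 := hy x hx
  rw [sum_mul_eq_card] at h0
  have : (supp x).filter (fun j => Hstar C ⟨y, hy⟩ j = 1)
      = Finset.univ.filter (fun j => y j = 1 ∧ x j = 1) := by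
    ext j
    simp only [Finset.mem_filter, mem_supp, Finset.mem_univ, true_and, zmod2_ne_zero]
    exact ⟨fun h => ⟨h.2, h.1⟩, fun h => ⟨h.2, h.1⟩⟩
  rw [this] at hcard
  rw [hcard] at h0
  simp at h0

/-- Stopping sets are closed under union. -/
lemma stopping_union {ρ : Type*} {H : Matrix ρ (Fin n) (ZMod 2)} {S T : Finset (Fin n)}
    (hS : IsStoppingSet H S) (hT : IsStoppingSet H T) : IsStoppingSet H (S ∪ T) := by
  intro i hcard
  obtain ⟨j, hj⟩ := Finset.card_eq_one.mp hcard
  rw [Finset.filter_union] at hj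
  have hSj : S.filter (fun j => H i j = 1) = ∅ := by
    rcases Finset.eq_empty_or_nonempty (S.filter (fun j => H i j = 1)) with h | h
    · exact h
    · exfalso
      apply hS i
      have hsub : S.filter (fun j => H i j = 1) ⊆ {j} := hj ▸ Finset.subset_union_left
      have h1 := Finset.card_le_card hsub
      have h2 := Finset.card_pos.mpr h
      simp only [Finset.card_singleton] at h1
      omega
  have hTj : T.filter (fun j => H i j = 1) = ∅ := by
    rcases Finset.eq_empty_or_nonempty (T.filter (fun j => H i j = 1)) with h | h
    · exact h
    · exfalso
      apply hT i
      have hsub : T.filter (fun j => H i j = 1) ⊆ {j} := hj ▸ Finset.subset_union_right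
      have h1 := Finset.card_le_card hsub
      have h2 := Finset.card_pos.mpr h
      simp only [Finset.card_singleton] at h1
      omega
  rw [hSj, hTj] at hj
  exact Finset.singleton_ne_empty j hj.symm

/-- Under MinStopping, codeword supports are closed under intersection. -/
lemma inter_codeword (hM : MinStopping C) {x y : Fin n → ZMod 2}
    (hx : x ∈ C) (hy : y ∈ C) : ∃ z, z ∈ C ∧ supp z = supp x ∩ supp y := by
  obtain ⟨w, hwC, hws⟩ := hM _ (stopping_union (supp_isStopping hx) (supp_isStopping hy))
  refine ⟨w + x + y, C.add_mem (C.add_mem hwC hx) hy, ?_⟩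
  ext j
  have hw : w j ≠ 0 ↔ (x j ≠ 0 ∨ y j ≠ 0) := by
    have := Finset.ext_iff.mp hws j
    simpa [mem_supp, Finset.mem_union] using this
  simp only [mem_supp, Finset.mem_inter, Pi.add_apply]
  rcases zmod2_cases (x j) with h | h <;> rcases zmod2_cases (y j) with h' | h' <;>
    rcases zmod2_cases (w j) with h'' | h'' <;>
    simp [h, h', h''] at hw ⊢ <;> decide

open scoped Classical in
noncomputable def cls (C : Submodule (ZMod 2) (Fin n → ZMod 2)) (p : Fin n) : Finset (Fin n) :=
  Finset.univ.filter (fun q => ∀ x ∈ C, x q = x p)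

lemma mem_cls {p q : Fin n} : q ∈ cls C p ↔ ∀ x ∈ C, x q = x p := by
  simp [cls]

lemma cls_self (p : Fin n) : p ∈ cls C p := mem_cls.mpr fun x _ => rfl

lemma cls_eq {p q : Fin n} (h : ∀ x ∈ C, x q = x p) : cls C q = cls C p := by
  ext r
  simp only [mem_cls]
  constructor
  · intro hr x hx; rw [hr x hx, h x hx]
  · intro hr x hx; rw [hr x hx, h x hx]

lemma exists_supp_eq_cls_aux (hM : MinStopping C) {p : Fin n} :
    ∀ N (c : Fin n → ZMod 2), c ∈ C → c p ≠ 0 → wt c ≤ N →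
      ∃ z, z ∈ C ∧ supp z = cls C p := by
  intro N
  induction N with
  | zero =>
    intro c hc hcp hw
    exfalso
    have : p ∈ supp c := mem_supp.mpr hcp
    have := Finset.card_pos.mpr ⟨p, this⟩
    simp only [wt] at hw
    omega
  | succ N ih =>
    intro c hc hcp hw
    by_cases h : supp c = cls C p
    · exact ⟨c, hc, h⟩
    · have hsub : cls C p ⊆ supp c := by
        intro q hq
        rw [mem_cls] at hq
        rw [mem_supp, hq c hc]
        exact hcp
      obtain ⟨q, hqs, hqc⟩ := Finset.exists_of_ssubset (lt_of_le_of_ne hsub (Ne.symm h))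
      rw [mem_cls] at hqc
      push_neg at hqc
      obtain ⟨x, hx, hxq⟩ := hqc
      -- produce x' ∈ C with x' p ≠ 0 and x' q = 0
      obtain ⟨x', hx', hx'p, hx'q⟩ : ∃ x', x' ∈ C ∧ x' p ≠ 0 ∧ x' q = 0 := by
        rcases zmod2_cases (x p) with h0 | h1
        · refine ⟨x + c, C.add_mem hx hc, ?_, ?_⟩
          · simp only [Pi.add_apply, h0, zero_add]; exact hcp
          · have hxq1 : x q = 1 := by
              rcases zmod2_cases (x q) with h' | h'
              · exact absurd (h'.trans h0.symm) hxq
              · exact h'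
            have hcq1 : c q = 1 := zmod2_ne_zero.mp (mem_supp.mp hqs)
            simp only [Pi.add_apply, hxq1, hcq1]; decide
        · refine ⟨x, hx, ?_, ?_⟩
          · rw [h1]; exact one_ne_zero
          · rcases zmod2_cases (x q) with h' | h'
            · exact h'
            · exact absurd (h'.trans h1.symm) hxq
      obtain ⟨z, hz, hzs⟩ := inter_codeword hM hc hx'
      have hzp : z p ≠ 0 := by
        rw [← mem_supp, hzs, Finset.mem_inter]
        exact ⟨hsub (cls_self p), mem_supp.mpr hx'p⟩
      have hzw : wt z ≤ N := by
        have h1 : supp z ⊆ supp c := hzs ▸ Finset.inter_subset_left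
        have h2 : q ∉ supp z := by
          rw [hzs, Finset.mem_inter, mem_supp, mem_supp]
          intro hcon
          exact hcon.2 hx'q
        have : supp z ⊂ supp c := ⟨h1, fun hcon => h2 (hcon hqs)⟩
        have := Finset.card_lt_card this
        simp only [wt] at *
        omega
      exact ih z hz hzp hzw

open scoped Classical in
lemma indicator_cls_mem (hM : MinStopping C) {p : Fin n}
    (hp : ∃ c ∈ C, c p ≠ 0) :
    (fun q => if q ∈ cls C p then (1 : ZMod 2) else 0) ∈ C := by
  obtain ⟨c, hc, hcp⟩ := hp
  obtain ⟨z, hz, hzs⟩ := exists_supp_eq_cls_aux hM (wt c) c hc hcp le_rfl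
  have : (fun q => if q ∈ cls C p then (1 : ZMod 2) else 0) = z := by
    funext q
    by_cases hq : q ∈ cls C p
    · rw [if_pos hq]
      exact (zmod2_ne_zero.mp (mem_supp.mp (hzs ▸ hq : q ∈ supp z))).symm
    · rw [if_neg hq]
      have : q ∉ supp z := fun hcon => hq (hzs ▸ hcon)
      rw [mem_supp] at this
      push_neg at this
      exact this.symm
  rw [this]
  exact hz

lemma structured_mem_aux (hM : MinStopping C) :
    ∀ N (x : Fin n → ZMod 2), wt x ≤ N →
      (∀ q q', (∀ y ∈ C, y q = y q') → x q = x q') →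
      (∀ q, (∀ y ∈ C, y q = 0) → x q = 0) → x ∈ C := by
  classical
  intro N
  induction N with
  | zero =>
    intro x hw _ _
    have hx : x = 0 := by
      funext j
      by_contra hj
      have : j ∈ supp x := mem_supp.mpr hj
      have := Finset.card_pos.mpr ⟨j, this⟩
      simp only [wt] at hw
      omega
    rw [hx]; exact C.zero_mem
  | succ N ih =>
    intro x hw h1 h2
    by_cases hx0 : wt x = 0
    · have hx : x = 0 := by
        funext j
        by_contra hj
        have := Finset.card_pos.mpr ⟨j, mem_supp.mpr hj⟩
        simp only [wt] at hx0
        omega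
      rw [hx]; exact C.zero_mem
    · obtain ⟨p, hp⟩ := Finset.card_pos.mp (Nat.pos_of_ne_zero hx0)
      have hxp : x p ≠ 0 := mem_supp.mp hp
      have hpZ : ∃ c ∈ C, c p ≠ 0 := by
        by_contra hcon
        push_neg at hcon
        exact hxp (h2 p hcon)
      set c' : Fin n → ZMod 2 := fun q => if q ∈ cls C p then (1 : ZMod 2) else 0 with hc'
      have hc'C : c' ∈ C := indicator_cls_mem hM hpZ
      set x' := x + c' with hx'
      have hkey : ∀ q, x' q = if q ∈ cls C p then 0 else x q := by
        intro q
        by_cases hq : q ∈ cls C p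
        · have hxq : x q = x p := h1 q p (mem_cls.mp hq)
          have : x p = 1 := zmod2_ne_zero.mp hxp
          simp only [hx', hc', Pi.add_apply, if_pos hq, hxq, this]
          decide
        · simp [hx', hc', Pi.add_apply, if_neg hq]
      have hsupp : supp x' ⊆ supp x := by
        intro q hq
        rw [mem_supp, hkey q] at hq
        by_cases h : q ∈ cls C p
        · rw [if_pos h] at hq; exact absurd rfl hq
        · rw [if_neg h] at hq; exact mem_supp.mpr hq
      have hpns : p ∉ supp x' := by
        rw [mem_supp, hkey p, if_pos (cls_self p)]
        simp
      have hwx' : wt x' ≤ N := by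
        have : supp x' ⊂ supp x := ⟨hsupp, fun hcon => hpns (hcon hp)⟩
        have := Finset.card_lt_card this
        simp only [wt] at *
        omega
      have hx'1 : ∀ q q', (∀ y ∈ C, y q = y q') → x' q = x' q' := by
        intro q q' hqq'
        have hcls : q ∈ cls C p ↔ q' ∈ cls C p := by
          simp only [mem_cls]
          constructor
          · intro h y hy; rw [← hqq' y hy]; exact h y hy
          · intro h y hy; rw [hqq' y hy]; exact h y hy
        rw [hkey q, hkey q']
        by_cases h : q ∈ cls C p
        · rw [if_pos h, if_pos (hcls.mp h)]
        · rw [if_neg h, if_neg (fun hcon => h (hcls.mpr hcon))]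
          exact h1 q q' hqq'
      have hx'2 : ∀ q, (∀ y ∈ C, y q = 0) → x' q = 0 := by
        intro q hq
        rw [hkey q]
        by_cases h : q ∈ cls C p
        · rw [if_pos h]
        · rw [if_neg h]; exact h2 q hq
      have hx'C : x' ∈ C := ih x' hwx' hx'1 hx'2
      have : x = x' + c' := by
        funext q
        simp only [hx', Pi.add_apply, add_assoc, zmod2_add_self, add_zero]
      rw [this]
      exact C.add_mem hx'C hc'C

/-- Main forward ingredient: under MinStopping, membership in C is characterized by
being constant on equivalence classes and zero on always-zero coordinates. -/
lemma mem_iff_structured (hM : MinStopping C) (x : Fin n → ZMod 2) :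
    x ∈ C ↔ ((∀ q q', (∀ y ∈ C, y q = y q') → x q = x q') ∧
             (∀ q, (∀ y ∈ C, y q = 0) → x q = 0)) := by
  constructor
  · intro hx
    exact ⟨fun q q' h => h x hx, fun q h => h x hx⟩
  · rintro ⟨h1, h2⟩
    exact structured_mem_aux hM (wt x) x le_rfl h1 h2

open scoped Classical in
lemma stopping_zero {S : Finset (Fin n)} (hS : IsStoppingSet (Hstar C) S)
    {q : Fin n} (h : ∀ z ∈ C, z q = 0) : q ∉ S := by
  intro hq
  set y : Fin n → ZMod 2 := fun t => if t = q then 1 else 0 with hy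
  have hyd : y ∈ dualCode C := by
    intro z hz
    have : ∀ t, y t * z t = if t = q then z t else 0 := by
      intro t
      by_cases ht : t = q <;> simp [hy, ht]
    rw [Finset.sum_congr rfl fun t _ => this t, Finset.sum_ite_eq' Finset.univ q z]
    simp [h z hz]
  apply hS ⟨y, hyd⟩
  have : S.filter (fun j => Hstar C ⟨y, hyd⟩ j = 1) = {q} := by
    ext j
    simp only [Finset.mem_filter, Finset.mem_singleton]
    constructor
    · rintro ⟨-, hj⟩
      by_contra hjq
      simp only [Hstar, hy] at hj
      rw [if_neg hjq] at hj
      exact zero_ne_one hj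
    · rintro rfl
      exact ⟨hq, by simp [Hstar, hy]⟩
  rw [this]
  simp

open scoped Classical in
lemma stopping_pair {S : Finset (Fin n)} (hS : IsStoppingSet (Hstar C) S)
    {p q : Fin n} (hpq : p ≠ q) (h : ∀ z ∈ C, z p = z q) (hp : p ∈ S) : q ∈ S := by
  by_contra hq
  set y : Fin n → ZMod 2 := fun t => if t = p ∨ t = q then 1 else 0 with hy
  have hyd : y ∈ dualCode C := by
    intro z hz
    have h1 : ∀ t, y t * z t = if t ∈ ({p, q} : Finset (Fin n)) then z t else 0 := by
      intro t
      by_cases ht : t = p ∨ t = q <;>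
        simp [hy, ht, Finset.mem_insert, Finset.mem_singleton]
    rw [Finset.sum_congr rfl fun t _ => h1 t, Finset.sum_ite_mem, Finset.univ_inter,
      Finset.sum_pair hpq, h z hz, zmod2_add_self]
  apply hS ⟨y, hyd⟩
  have : S.filter (fun j => Hstar C ⟨y, hyd⟩ j = 1) = {p} := by
    ext j
    simp only [Finset.mem_filter, Finset.mem_singleton]
    constructor
    · rintro ⟨hjS, hj⟩
      simp only [Hstar, hy] at hj
      by_cases hjpq : j = p ∨ j = q
      · rcases hjpq with rfl | rfl
        · rfl
        · exact absurd hjS hq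
      · rw [if_neg hjpq] at hj
        exact absurd hj zero_ne_one
    · rintro rfl
      exact ⟨hp, by simp [Hstar, hy]⟩
  rw [this]
  simp

/-- canonical representative of the class of `q`: the minimum of the class. -/
noncomputable def frep (C : Submodule (ZMod 2) (Fin n → ZMod 2)) (q : Fin n) : Fin n :=
  (cls C q).min' ⟨q, cls_self q⟩

lemma min'_eq_of_eq {s t : Finset (Fin n)} (h : s = t) (hs : s.Nonempty) (ht : t.Nonempty) :
    s.min' hs = t.min' ht := by subst h; rfl

lemma frep_mem_cls (q : Fin n) : frep C q ∈ cls C q := Finset.min'_mem _ _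

lemma frep_spec (q : Fin n) : ∀ y ∈ C, y (frep C q) = y q := mem_cls.mp (frep_mem_cls q)

lemma cls_frep (q : Fin n) : cls C (frep C q) = cls C q := cls_eq (frep_spec q)

lemma frep_eq_of_cls_eq {q q' : Fin n} (h : cls C q = cls C q') : frep C q = frep C q' :=
  min'_eq_of_eq h _ _

lemma frep_frep (q : Fin n) : frep C (frep C q) = frep C q :=
  frep_eq_of_cls_eq (cls_frep q)

/-- the always-zero predicate -/
def Zp (C : Submodule (ZMod 2) (Fin n → ZMod 2)) (j : Fin n) : Prop := ∀ y ∈ C, y j = 0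

open scoped Classical in
/-- representatives of the big (non-zero) classes -/
noncomputable def Rset (C : Submodule (ZMod 2) (Fin n → ZMod 2)) : Finset (Fin n) :=
  Finset.univ.filter (fun r => ¬ Zp C r ∧ frep C r = r ∧ 2 ≤ (cls C r).card)

lemma mem_Rset {r : Fin n} : r ∈ Rset C ↔ (¬ Zp C r ∧ frep C r = r ∧ 2 ≤ (cls C r).card) := by
  simp [Rset]

lemma frep_mem_R {j : Fin n} (h1 : ¬ Zp C j) (h2 : (cls C j).card ≠ 1) :
    frep C j ∈ Rset C := by
  simp only [Rset, Finset.mem_filter, Finset.mem_univ, true_and]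
  refine ⟨?_, frep_frep j, ?_⟩
  · intro hz
    exact h1 (fun y hy => by rw [← frep_spec j y hy]; exact hz y hy)
  · rw [cls_frep]
    have := Finset.card_pos.mpr ⟨j, cls_self (C := C) j⟩
    omega

open scoped Classical in
/-- the classifier map -/
noncomputable def kmap (C : Submodule (ZMod 2) (Fin n → ZMod 2)) (j : Fin n) :
    Fin (Rset C).card ⊕ Bool :=
  if h1 : Zp C j then Sum.inr true
  else if h2 : (cls C j).card = 1 then Sum.inr false
  else Sum.inl ((Rset C).equivFin ⟨frep C j, frep_mem_R h1 h2⟩)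

lemma kmap_eq_inr_true {j : Fin n} : kmap C j = Sum.inr true ↔ Zp C j := by
  unfold kmap
  split_ifs with h1 h2 <;> simp [h1]

lemma kmap_eq_inl {j : Fin n} {i : Fin (Rset C).card} :
    kmap C j = Sum.inl i ↔
      (¬ Zp C j ∧ (cls C j).card ≠ 1 ∧ frep C j = ((Rset C).equivFin.symm i).val) := by
  unfold kmap
  split_ifs with h1 h2
  · simp [h1]
  · simp [h1, h2]
  · simp only [Sum.inl.injEq, h1, h2, not_false_iff, true_and, Ne, not_false_eq_true]
    rw [Equiv.apply_eq_iff_eq_symm_apply]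
    constructor
    · intro h; rw [← h]
    · intro h; exact Subtype.ext h

open scoped Classical in
lemma fiber_inl (i : Fin (Rset C).card) :
    Finset.univ.filter (fun j => kmap C j = Sum.inl i)
      = cls C ((Rset C).equivFin.symm i).val := by
  have hr := ((Rset C).equivFin.symm i).property
  rw [mem_Rset] at hr
  obtain ⟨hrZ, hrf, hrc⟩ := hr
  ext j
  simp only [Finset.mem_filter, Finset.mem_univ, true_and, kmap_eq_inl]
  constructor
  · rintro ⟨h1, h2, h3⟩
    have : j ∈ cls C (frep C j) := mem_cls.mpr (fun x hx => (frep_spec j x hx).symm)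
    rwa [h3] at this
  · intro hj
    have hjr : ∀ x ∈ C, x j = x ((Rset C).equivFin.symm i).val := mem_cls.mp hj
    have hclseq : cls C j = cls C ((Rset C).equivFin.symm i).val := cls_eq hjr
    refine ⟨?_, ?_, ?_⟩
    · intro hz
      apply hrZ
      intro y hy
      rw [← hjr y hy]
      exact hz y hy
    · rw [hclseq]; omega
    · rw [frep_eq_of_cls_eq hclseq, hrf]

end A

/-- distributing a sigma over `Fin u ⊕ Bool`. -/
def myE1 {u : ℕ} (P : Fin u ⊕ Bool → Type*) :
    ((Σ i : Fin u, P (Sum.inl i)) ⊕ (P (Sum.inr false) ⊕ P (Sum.inr true))) ≃ Σ t, P t where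
  toFun := Sum.elim (fun x => ⟨Sum.inl x.1, x.2⟩)
    (Sum.elim (fun y => ⟨Sum.inr false, y⟩) (fun y => ⟨Sum.inr true, y⟩))
  invFun := fun x => match x with
    | ⟨Sum.inl i, y⟩ => Sum.inl ⟨i, y⟩
    | ⟨Sum.inr false, y⟩ => Sum.inr (Sum.inl y)
    | ⟨Sum.inr true, y⟩ => Sum.inr (Sum.inr y)
  left_inv := by rintro (⟨i, y⟩ | (y | y)) <;> rfl
  right_inv := by
    rintro ⟨t, y⟩
    rcases t with i | b
    · rfl
    · cases b <;> rfl

/-- A binary linear [n,k,d] code C is minimum stopping (every stopping set of the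
complete parity-check matrix is the support of a codeword) if and only if C is
equivalent, up to a coordinate permutation, to
R_{n₁} ⊕ ... ⊕ R_{n_u} ⊕ F_{n_F} ⊕ Z_{n_Z} with n₁,...,n_u ≥ 2 and
n₁ + ... + n_u + n_F + n_Z = n. -/
theorem stmt_19 {n : ℕ} (C : Submodule (ZMod 2) (Fin n → ZMod 2)) :
    MinStopping C ↔
      ∃ (u nF nZ : ℕ) (m : Fin u → ℕ), (∀ i, 2 ≤ m i) ∧
        (∑ i, m i) + nF + nZ = n ∧
        ∃ σ : Fin n ≃ ((Σ i, Fin (m i)) ⊕ (Fin nF ⊕ Fin nZ)),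
          ∀ x : Fin n → ZMod 2,
            x ∈ C ↔
              ((∀ (i : Fin u) (j j' : Fin (m i)),
                  x (σ.symm (Sum.inl ⟨i, j⟩)) = x (σ.symm (Sum.inl ⟨i, j'⟩))) ∧
                ∀ j : Fin nZ, x (σ.symm (Sum.inr (Sum.inr j))) = 0) := by
  classical
  constructor
  · -- forward
    intro hM
    refine ⟨(Rset C).card,
      Fintype.card {j : Fin n // kmap C j = Sum.inr false},
      Fintype.card {j : Fin n // kmap C j = Sum.inr true},
      fun i => Fintype.card {j : Fin n // kmap C j = Sum.inl i}, ?_, ?_, ?_⟩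
    · intro i
      have hr := ((Rset C).equivFin.symm i).property
      rw [mem_Rset] at hr
      show 2 ≤ Fintype.card {j : Fin n // kmap C j = Sum.inl i}
      rw [Fintype.card_subtype, fiber_inl]
      exact hr.2.2
    · have hcard := Fintype.card_congr
        ((Equiv.sumCongr
          (Equiv.sigmaCongrRight fun i =>
            (Fintype.equivFin {j : Fin n // kmap C j = Sum.inl i}).symm)
          (Equiv.sumCongr (Fintype.equivFin {j : Fin n // kmap C j = Sum.inr false}).symm
            (Fintype.equivFin {j : Fin n // kmap C j = Sum.inr true}).symm)).trans
          ((myE1 (fun t => {j : Fin n // kmap C j = t})).trans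
            (Equiv.sigmaFiberEquiv (kmap C))))
      simp only [Fintype.card_sum, Fintype.card_sigma, Fintype.card_fin] at hcard
      beta_reduce
      omega
    · set e : ((Σ i : Fin (Rset C).card,
            Fin (Fintype.card {j : Fin n // kmap C j = Sum.inl i})) ⊕
          (Fin (Fintype.card {j : Fin n // kmap C j = Sum.inr false}) ⊕
            Fin (Fintype.card {j : Fin n // kmap C j = Sum.inr true}))) ≃ Fin n :=
        (Equiv.sumCongr
          (Equiv.sigmaCongrRight fun i =>
            (Fintype.equivFin {j : Fin n // kmap C j = Sum.inl i}).symm)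
          (Equiv.sumCongr (Fintype.equivFin {j : Fin n // kmap C j = Sum.inr false}).symm
            (Fintype.equivFin {j : Fin n // kmap C j = Sum.inr true}).symm)).trans
          ((myE1 (fun t => {j : Fin n // kmap C j = t})).trans
            (Equiv.sigmaFiberEquiv (kmap C))) with he
      refine ⟨e.symm, ?_⟩
      have hsymm : ∀ z, e.symm.symm z = e z := fun z => rfl
      have he1 : ∀ (i : Fin (Rset C).card)
          (j : Fin (Fintype.card {j : Fin n // kmap C j = Sum.inl i})),
          e (Sum.inl ⟨i, j⟩)
            = ((Fintype.equivFin {q : Fin n // kmap C q = Sum.inl i}).symm j).val :=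
        fun i j => rfl
      have he3 : ∀ (j : Fin (Fintype.card {j : Fin n // kmap C j = Sum.inr true})),
          e (Sum.inr (Sum.inr j))
            = ((Fintype.equivFin {q : Fin n // kmap C q = Sum.inr true}).symm j).val :=
        fun j => rfl
      have hk1 : ∀ i j, kmap C (e (Sum.inl ⟨i, j⟩)) = Sum.inl i := by
        intro i j
        rw [he1]
        exact ((Fintype.equivFin _).symm j).property
      have hk3 : ∀ j, kmap C (e (Sum.inr (Sum.inr j))) = Sum.inr true := by
        intro j
        rw [he3]
        exact ((Fintype.equivFin _).symm j).property
      have hsurj1 : ∀ i q, kmap C q = Sum.inl i → ∃ j, e (Sum.inl ⟨i, j⟩) = q := by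
        intro i q h
        refine ⟨Fintype.equivFin _ ⟨q, h⟩, ?_⟩
        rw [he1, Equiv.symm_apply_apply]
      have hsurjZ : ∀ q, kmap C q = Sum.inr true → ∃ j, e (Sum.inr (Sum.inr j)) = q := by
        intro q h
        refine ⟨Fintype.equivFin _ ⟨q, h⟩, ?_⟩
        rw [he3, Equiv.symm_apply_apply]
      have hclsfact : ∀ i q, kmap C q = Sum.inl i →
          ∀ x ∈ C, x q = x ((Rset C).equivFin.symm i).val := by
        intro i q h
        have : q ∈ cls C ((Rset C).equivFin.symm i).val := by
          rw [← fiber_inl]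
          simp [h]
        exact mem_cls.mp this
      intro x
      constructor
      · intro hx
        constructor
        · intro i j j'
          rw [hsymm, hsymm]
          rw [hclsfact i _ (hk1 i j) x hx, hclsfact i _ (hk1 i j') x hx]
        · intro j
          rw [hsymm]
          exact kmap_eq_inr_true.mp (hk3 j) x hx
      · rintro ⟨h1, h2⟩
        simp only [hsymm] at h1 h2
        rw [mem_iff_structured hM]
        constructor
        · intro q q' hqq'
          by_cases hz : Zp C q
          · have hz' : Zp C q' := fun y hy => by rw [← hqq' y hy]; exact hz y hy
            obtain ⟨j, hj⟩ := hsurjZ q (kmap_eq_inr_true.mpr hz)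
            obtain ⟨j', hj'⟩ := hsurjZ q' (kmap_eq_inr_true.mpr hz')
            rw [← hj, ← hj', h2 j, h2 j']
          · have hz' : ¬ Zp C q' := fun hcon => hz
              (fun y hy => by rw [hqq' y hy]; exact hcon y hy)
            have hclseq : cls C q = cls C q' := cls_eq hqq'
            by_cases hc1 : (cls C q).card = 1
            · have hq' : q' ∈ cls C q := mem_cls.mpr (fun y hy => (hqq' y hy).symm)
              have hq : q ∈ cls C q := cls_self q
              obtain ⟨a, ha⟩ := Finset.card_eq_one.mp hc1
              rw [ha, Finset.mem_singleton] at hq hq'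
              rw [hq, hq']
            · set i := (Rset C).equivFin ⟨frep C q, frep_mem_R hz hc1⟩ with hi
              have hkq : kmap C q = Sum.inl i := by
                unfold kmap
                rw [dif_neg hz, dif_neg hc1]
              have hkq' : kmap C q' = Sum.inl i := by
                unfold kmap
                have hc1' : ¬ (cls C q').card = 1 := by rw [← hclseq]; exact hc1
                rw [dif_neg hz', dif_neg hc1']
                have hfr : frep C q' = frep C q := frep_eq_of_cls_eq hclseq.symm
                rw [hi]
                exact congrArg _ (congrArg _ (Subtype.ext hfr))
              obtain ⟨j, hj⟩ := hsurj1 i q hkq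
              obtain ⟨j', hj'⟩ := hsurj1 i q' hkq'
              rw [← hj, ← hj']
              exact h1 i j j'
        · intro q hq
          obtain ⟨j, hj⟩ := hsurjZ q (kmap_eq_inr_true.mpr hq)
          rw [← hj]
          exact h2 j
  · -- backward
    rintro ⟨u, nF, nZ, m, hm, hsum, σ, hσ⟩ S hS
    refine ⟨fun j => if j ∈ S then (1 : ZMod 2) else 0, ?_, ?_⟩
    · rw [hσ]
      constructor
      · intro i j j'
        by_cases hjj : j = j'
        · rw [hjj]
        · have hpq : σ.symm (Sum.inl ⟨i, j⟩) ≠ σ.symm (Sum.inl ⟨i, j'⟩) := by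
            intro hcon
            apply hjj
            have := σ.symm.injective hcon
            simpa using this
          have hzeq : ∀ z ∈ C, z (σ.symm (Sum.inl ⟨i, j⟩)) = z (σ.symm (Sum.inl ⟨i, j'⟩)) :=
            fun z hz => ((hσ z).mp hz).1 i j j'
          have hiff : σ.symm (Sum.inl ⟨i, j⟩) ∈ S ↔ σ.symm (Sum.inl ⟨i, j'⟩) ∈ S :=
            ⟨stopping_pair hS hpq hzeq,
              stopping_pair hS (Ne.symm hpq) (fun z hz => (hzeq z hz).symm)⟩
          by_cases hp : σ.symm (Sum.inl ⟨i, j⟩) ∈ S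
          · rw [if_pos hp, if_pos (hiff.mp hp)]
          · rw [if_neg hp, if_neg (fun hcon => hp (hiff.mpr hcon))]
      · intro j
        have : σ.symm (Sum.inr (Sum.inr j)) ∉ S :=
          stopping_zero hS (fun z hz => ((hσ z).mp hz).2 j)
        rw [if_neg this]
    · ext j
      rw [mem_supp]
      by_cases hj : j ∈ S <;> simp [hj]
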